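/- arXiv:2005.04590 — 2 statements merged into one kernel-verified Lean document; each statement's English description precedes it below -/
import Mathlib

section
/- Let X be an A-bounded operator on H admitting an A-adjoint Xs (i.e. A∘Xs = X*∘A), and let Xss be an A-adjoint of Xs (i.e. A∘Xss = Xs*∘A). Then max{‖Xs∘X + Xs∘Xss‖_A, ‖X∘Xs + Xss∘Xs‖_A} = 2·‖X‖_A². -/
noncomputable def sInner {E : Type*} [NormedAddCommGroup E] [InnerProductSpace ℂ E]
    (A : E →L[ℂ] E) (x y : E) : ℂ := inner ℂ (A x) y

noncomputable def sNorm {E : Type*} [NormedAddCommGroup E] [InnerProductSpace ℂ E]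
    (A : E →L[ℂ] E) (x : E) : ℝ := Real.sqrt (sInner A x x).re

/-- The `A`-operator seminorm. -/
noncomputable def opSNorm {E : Type*} [NormedAddCommGroup E] [InnerProductSpace ℂ E]
    (A T : E →L[ℂ] E) : ℝ := sSup {c | ∃ x : E, sNorm A x = 1 ∧ c = sNorm A (T x)}

/-- The `A`-numerical radius. -/
noncomputable def numRad {E : Type*} [NormedAddCommGroup E] [InnerProductSpace ℂ E]
    (A T : E →L[ℂ] E) : ℝ := sSup {c | ∃ x : E, sNorm A x = 1 ∧ c = ‖sInner A (T x) x‖}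

/-- `T` is `A`-bounded. -/
def ABounded {E : Type*} [NormedAddCommGroup E] [InnerProductSpace ℂ E]
    (A T : E →L[ℂ] E) : Prop := ∃ c > 0, ∀ x : E, sNorm A (T x) ≤ c * sNorm A x

/-- The 2×2 block operator `[[T, X], [Y, S]]` on `H ⊕ H` (with the ℓ² product structure). -/
noncomputable def blk {H : Type*} [NormedAddCommGroup H] [InnerProductSpace ℂ H]
    (T X Y S : H →L[ℂ] H) : WithLp 2 (H × H) →L[ℂ] WithLp 2 (H × H) :=
  ((WithLp.prodContinuousLinearEquiv 2 ℂ H H).symm.toContinuousLinearMap.comp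
    (((T.coprod X).prod (Y.coprod S)).comp
      (WithLp.prodContinuousLinearEquiv 2 ℂ H H).toContinuousLinearMap))

/-- The diagonal operator `𝔸 = diag(A, A)` on `H ⊕ H`. -/
noncomputable def twoA {H : Type*} [NormedAddCommGroup H] [InnerProductSpace ℂ H]
    (A : H →L[ℂ] H) : WithLp 2 (H × H) →L[ℂ] WithLp 2 (H × H) := blk A 0 0 A

set_option linter.unusedSectionVars false

/-!
Write `‖·‖_A` for `sNorm A`. If `A S = T* A`, then `‖S x‖_A² = Re ⟨x, T S x⟩_A`, and the
Cauchy–Schwarz inequality for `⟨x, y⟩_A = ⟨A^{1/2} x, A^{1/2} y⟩` gives `‖S‖_A = ‖T‖_A`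
and `‖S T‖_A = ‖T‖_A²`. The relation is symmetric (`A T = S* A`, as `A` is self-adjoint),
and since `A Xss = Xs* A = A X`, the two operators of the theorem agree, after composing
with `A`, with `2 Xs X` and `2 X Xs`; the seminorm `‖·‖_A` of a vector only depends on its
image under `A`.
-/

open ContinuousLinearMap
open scoped Pointwise

def IsAAdjoint {H : Type*} [NormedAddCommGroup H] [InnerProductSpace ℂ H] [CompleteSpace H]
    (A T S : H →L[ℂ] H) : Prop :=
  A ∘L S = adjoint T ∘L A

section SemiNorm

variable {H : Type*} [NormedAddCommGroup H] [InnerProductSpace ℂ H] {A T : H →L[ℂ] H}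

lemma sNorm_nonneg (x : H) : 0 ≤ sNorm A x := Real.sqrt_nonneg _

lemma sNorm_smul (c : ℂ) (x : H) : sNorm A (c • x) = ‖c‖ * sNorm A x := by
  unfold sNorm sInner
  rw [map_smul, inner_smul_left, inner_smul_right, ← mul_assoc, mul_comm (starRingEnd ℂ c) c,
    Complex.mul_conj, Complex.re_ofReal_mul, Real.sqrt_mul (Complex.normSq_nonneg c)]
  simp [← Complex.norm_def]

lemma opSNorm_nonneg (T : H →L[ℂ] H) : 0 ≤ opSNorm A T :=
  Real.sSup_nonneg fun _ ⟨_, _, hc⟩ => hc ▸ sNorm_nonneg _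

lemma opSNorm_le_bound {c : ℝ} (hc : 0 ≤ c)
    (h : ∀ x : H, sNorm A x = 1 → sNorm A (T x) ≤ c) :
    opSNorm A T ≤ c :=
  Real.sSup_le (fun _ ⟨x, hx, hb⟩ => hb ▸ h x hx) hc

lemma sNorm_apply_le_opSNorm_mul (hT : ABounded A T) (x : H) :
    sNorm A (T x) ≤ opSNorm A T * sNorm A x := by
  obtain ⟨c, -, hc⟩ := hT
  have bdd : BddAbove {b | ∃ x : H, sNorm A x = 1 ∧ b = sNorm A (T x)} :=
    ⟨c, fun _ ⟨y, hy, hb⟩ => hb ▸ by simpa [hy] using hc y⟩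
  rcases (sNorm_nonneg (A := A) x).eq_or_lt with h0 | hpos
  · rw [← h0, mul_zero]
    simpa [← h0] using hc x
  · set r := sNorm A x
    have hunit : sNorm A ((r⁻¹ : ℂ) • x) = 1 := by
      rw [sNorm_smul, norm_inv, Complex.norm_real, Real.norm_of_nonneg hpos.le,
        inv_mul_cancel₀ hpos.ne']
    have hle := le_csSup bdd ⟨_, hunit, rfl⟩
    rw [map_smul, sNorm_smul, norm_inv, Complex.norm_real, Real.norm_of_nonneg hpos.le,
      inv_mul_le_iff₀ hpos] at hle
    exact hle.trans_eq (mul_comm _ _)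

lemma ABounded.comp {S : H →L[ℂ] H} (hS : ABounded A S) (hT : ABounded A T) :
    ABounded A (S ∘L T) := by
  obtain ⟨c, hc0, hc⟩ := hS
  obtain ⟨d, hd0, hd⟩ := hT
  refine ⟨c * d, by positivity, fun x => ?_⟩
  calc sNorm A (S (T x)) ≤ c * sNorm A (T x) := hc _
    _ ≤ c * (d * sNorm A x) := by gcongr; exact hd x
    _ = c * d * sNorm A x := by ring

lemma opSNorm_smul (c : ℂ) (T : H →L[ℂ] H) : opSNorm A (c • T) = ‖c‖ * opSNorm A T := by
  have hset : {b | ∃ x : H, sNorm A x = 1 ∧ b = sNorm A ((c • T) x)}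
      = ‖c‖ • {b | ∃ x : H, sNorm A x = 1 ∧ b = sNorm A (T x)} := by
    ext b
    simp only [smul_apply, sNorm_smul, Set.mem_ofPred_eq, Set.mem_smul_set, smul_eq_mul]
    constructor
    · rintro ⟨x, hx, rfl⟩
      exact ⟨_, ⟨x, hx, rfl⟩, rfl⟩
    · rintro ⟨_, ⟨x, hx, rfl⟩, rfl⟩
      exact ⟨x, hx, rfl⟩
  rw [opSNorm, hset, Real.sSup_smul_of_nonneg (norm_nonneg c)]
  rfl

end SemiNorm

section Adjoint

variable {H : Type*} [NormedAddCommGroup H] [InnerProductSpace ℂ H] [CompleteSpace H]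
  {A T S : H →L[ℂ] H}

lemma sInner_eq_inner_sqrt (hA : A.IsPositive) (x y : H) :
    sInner A x y = inner ℂ (CFC.sqrt A x) (CFC.sqrt A y) := by
  have hsa : IsSelfAdjoint (CFC.sqrt A) :=
    ((nonneg_iff_isPositive _).mp (CFC.sqrt_nonneg A)).isSelfAdjoint
  conv_lhs => rw [sInner, ← CFC.sqrt_mul_sqrt_self A ((nonneg_iff_isPositive A).mpr hA)]
  rw [mul_apply_eq_comp, ← adjoint_inner_right, hsa.adjoint_eq]

lemma sNorm_eq_norm_sqrt (hA : A.IsPositive) (x : H) : sNorm A x = ‖CFC.sqrt A x‖ := by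
  rw [sNorm, sInner_eq_inner_sqrt hA, inner_self_eq_norm_sq_to_K (𝕜 := ℂ)]
  norm_cast
  exact Real.sqrt_sq (norm_nonneg _)

lemma re_sInner_le (hA : A.IsPositive) (x y : H) :
    (sInner A x y).re ≤ sNorm A x * sNorm A y := by
  rw [sInner_eq_inner_sqrt hA, sNorm_eq_norm_sqrt hA, sNorm_eq_norm_sqrt hA]
  exact re_inner_le_norm (𝕜 := ℂ) _ _

lemma re_sInner_self (hA : A.IsPositive) (x : H) : (sInner A x x).re = sNorm A x ^ 2 :=
  (Real.sq_sqrt (hA.re_inner_nonneg_left x)).symm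

lemma sNorm_eq_of_apply_eq (hA : IsSelfAdjoint A) {y z : H} (h : A y = A z) :
    sNorm A y = sNorm A z := by
  have hyz : sInner A y y = star (sInner A z z) :=
    calc sInner A y y = inner ℂ (A z) y := by rw [sInner, h]
      _ = inner ℂ z (A y) := hA.isSymmetric z y
      _ = star (sInner A z z) := by
          rw [h, sInner]
          exact (inner_conj_symm z (A z)).symm
  rw [sNorm, sNorm, hyz, Complex.star_def, Complex.conj_re]

lemma opSNorm_congr_of_comp_eq (hA : IsSelfAdjoint A) (h : A ∘L T = A ∘L S) :
    opSNorm A T = opSNorm A S := by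
  have hpt (x : H) : sNorm A (T x) = sNorm A (S x) :=
    sNorm_eq_of_apply_eq hA (DFunLike.congr_fun h x)
  simp only [opSNorm, hpt]

namespace IsAAdjoint

lemma symm (hA : IsSelfAdjoint A) (h : IsAAdjoint A T S) : IsAAdjoint A S T := by
  have h' := congrArg adjoint h
  rwa [adjoint_comp, adjoint_comp, adjoint_adjoint, hA.adjoint_eq, eq_comm] at h'

lemma sInner_apply_left (h : IsAAdjoint A T S) (u v : H) :
    sInner A (S u) v = sInner A u (T v) := by
  rw [sInner, ← comp_apply A S, h, comp_apply, adjoint_inner_left, sInner]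

lemma sNorm_apply_sq (hA : A.IsPositive) (h : IsAAdjoint A T S) (x : H) :
    sNorm A (S x) ^ 2 = (sInner A x (T (S x))).re := by
  rw [← re_sInner_self hA, h.sInner_apply_left]

lemma sNorm_apply_le (hA : A.IsPositive) (hT : ABounded A T) (h : IsAAdjoint A T S) (x : H) :
    sNorm A (S x) ≤ opSNorm A T * sNorm A x := by
  have hsq : sNorm A (S x) ^ 2 ≤ (opSNorm A T * sNorm A x) * sNorm A (S x) :=
    calc sNorm A (S x) ^ 2 = (sInner A x (T (S x))).re := h.sNorm_apply_sq hA x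
      _ ≤ sNorm A x * sNorm A (T (S x)) := re_sInner_le hA _ _
      _ ≤ sNorm A x * (opSNorm A T * sNorm A (S x)) := by
          gcongr
          · exact sNorm_nonneg x
          · exact sNorm_apply_le_opSNorm_mul hT _
      _ = (opSNorm A T * sNorm A x) * sNorm A (S x) := by ring
  have := mul_nonneg (opSNorm_nonneg (A := A) T) (sNorm_nonneg (A := A) x)
  nlinarith [sNorm_nonneg (A := A) (S x)]

lemma aBounded (hA : A.IsPositive) (hT : ABounded A T) (h : IsAAdjoint A T S) :
    ABounded A S :=
  ⟨opSNorm A T + 1, by linarith [opSNorm_nonneg (A := A) T], fun x =>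
    (h.sNorm_apply_le hA hT x).trans (by gcongr; exacts [sNorm_nonneg x, by linarith])⟩

lemma opSNorm_le (hA : A.IsPositive) (hT : ABounded A T) (h : IsAAdjoint A T S) :
    opSNorm A S ≤ opSNorm A T :=
  opSNorm_le_bound (opSNorm_nonneg T) fun x hx => by
    simpa [hx] using h.sNorm_apply_le hA hT x

lemma opSNorm_eq (hA : A.IsPositive) (hT : ABounded A T) (h : IsAAdjoint A T S) :
    opSNorm A S = opSNorm A T :=
  (h.opSNorm_le hA hT).antisymm
    ((h.symm hA.isSelfAdjoint).opSNorm_le hA (h.aBounded hA hT))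

lemma opSNorm_comp (hA : A.IsPositive) (hT : ABounded A T) (h : IsAAdjoint A T S) :
    opSNorm A (S ∘L T) = opSNorm A T ^ 2 := by
  have hS := h.aBounded hA hT
  refine le_antisymm (opSNorm_le_bound (sq_nonneg _) fun x hx => ?_) ?_
  · calc sNorm A (S (T x)) ≤ opSNorm A S * sNorm A (T x) := sNorm_apply_le_opSNorm_mul hS _
      _ ≤ opSNorm A T * (opSNorm A T * sNorm A x) := by
          rw [h.opSNorm_eq hA hT]
          gcongr
          · exact opSNorm_nonneg T
          · exact sNorm_apply_le_opSNorm_mul hT x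
      _ = opSNorm A T ^ 2 := by rw [hx]; ring
  · suffices opSNorm A T ≤ √(opSNorm A (S ∘L T)) from
      (Real.le_sqrt (opSNorm_nonneg T) (opSNorm_nonneg _)).mp this
    refine opSNorm_le_bound (Real.sqrt_nonneg _) fun x hx => ?_
    rw [Real.le_sqrt (sNorm_nonneg _) (opSNorm_nonneg _),
      (h.symm hA.isSelfAdjoint).sNorm_apply_sq hA]
    calc (sInner A x (S (T x))).re ≤ sNorm A x * sNorm A (S (T x)) := re_sInner_le hA _ _
      _ ≤ sNorm A x * (opSNorm A (S ∘L T) * sNorm A x) := by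
          gcongr
          exact sNorm_apply_le_opSNorm_mul (hS.comp hT) x
      _ = opSNorm A (S ∘L T) := by rw [hx]; ring

end IsAAdjoint

end Adjoint

theorem stmt11 {H : Type*} [NormedAddCommGroup H] [InnerProductSpace ℂ H] [CompleteSpace H]
    (A : H →L[ℂ] H) (hA : A.IsPositive)
    (X Xs Xss : H →L[ℂ] H) (hX : ABounded A X)
    (hXs : A.comp Xs = (ContinuousLinearMap.adjoint X).comp A)
    (hXss : A.comp Xss = (ContinuousLinearMap.adjoint Xs).comp A) :
    max (opSNorm A (Xs.comp X + Xs.comp Xss)) (opSNorm A (X.comp Xs + Xss.comp Xs)) =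
      2 * (opSNorm A X) ^ 2 := by
  have hXs' : IsAAdjoint A X Xs := hXs
  have hXXs : IsAAdjoint A Xs X := hXs'.symm hA.isSelfAdjoint
  have hXssX : A ∘L Xss = A ∘L X := hXss.trans (Eq.symm hXXs)
  have e1 : A ∘L (Xs ∘L X + Xs ∘L Xss) = A ∘L ((2 : ℂ) • (Xs ∘L X)) := by
    have : A ∘L (Xs ∘L Xss) = A ∘L (Xs ∘L X) := by
      rw [← comp_assoc, hXs, comp_assoc, hXssX, ← comp_assoc, ← hXs, comp_assoc]
    rw [comp_add, this, two_smul, comp_add]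
  have e2 : A ∘L (X ∘L Xs + Xss ∘L Xs) = A ∘L ((2 : ℂ) • (X ∘L Xs)) := by
    have : A ∘L (Xss ∘L Xs) = A ∘L (X ∘L Xs) := by rw [← comp_assoc, hXssX, comp_assoc]
    rw [comp_add, this, two_smul, comp_add]
  rw [opSNorm_congr_of_comp_eq hA.isSelfAdjoint e1, opSNorm_congr_of_comp_eq hA.isSelfAdjoint e2,
    opSNorm_smul, opSNorm_smul, hXs'.opSNorm_comp hA hX,
    hXXs.opSNorm_comp hA (hXs'.aBounded hA hX), hXs'.opSNorm_eq hA hX, max_self]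
  norm_num
end

section
/- Let T and X be A-bounded operators on H. Then max{w_A(T), w_A(X)} + (1/2)·|w_A(T+X) − w_A(T−X)| ≤ max{w_A(T+X), w_A(T−X)}. -/
/-
Since `2⟨Tx, x⟩_A = ⟨(T + X)x, x⟩_A + ⟨(T - X)x, x⟩_A` and
`2⟨Xx, x⟩_A = ⟨(T + X)x, x⟩_A - ⟨(T - X)x, x⟩_A`, both `w_A(T)` and `w_A(X)` are at most the mean
of `w_A(T + X)` and `w_A(T - X)`; adding half the distance between these two numbers to their mean
gives their maximum.
-/

theorem max_eq_add_div_two_add_abs_sub_div_two (a b : ℝ) :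
    max a b = (a + b) / 2 + |a - b| / 2 := by
  have := max_sub_min_eq_abs' a b
  have := min_add_max a b
  linarith

section

open ContinuousLinearMap

variable {E : Type*} [NormedAddCommGroup E] [InnerProductSpace ℂ E] {A : E →L[ℂ] E}

noncomputable abbrev sInnerCore (hA : A.IsPositive) : PreInnerProductSpace.Core ℂ E where
  inner := sInner A
  conj_inner_symm x y := by
    simp only [sInner, inner_conj_symm, hA.inner_left_eq_inner_right]
  re_inner_nonneg := hA.re_inner_nonneg_left
  add_left x y z := by simp [sInner]
  smul_left x y r := by simp [sInner, mul_comm]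

theorem norm_sInner_le_sNorm_mul_sNorm (hA : A.IsPositive) (x y : E) :
    ‖sInner A x y‖ ≤ sNorm A x * sNorm A y :=
  InnerProductSpace.Core.norm_inner_le_norm (c := sInnerCore hA) x y

theorem sNorm_add_le (hA : A.IsPositive) (x y : E) :
    sNorm A (x + y) ≤ sNorm A x + sNorm A y :=
  @norm_add_le E
    (InnerProductSpace.Core.toSeminormedAddCommGroup (c := sInnerCore hA)).toSeminormedAddGroup x y

theorem sNorm_neg (x : E) : sNorm A (-x) = sNorm A x := by
  simp [sNorm, sInner]

theorem ABounded.add (hA : A.IsPositive) {T X : E →L[ℂ] E} (hT : ABounded A T)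
    (hX : ABounded A X) : ABounded A (T + X) := by
  obtain ⟨c, hc, hcT⟩ := hT
  obtain ⟨d, hd, hdX⟩ := hX
  refine ⟨c + d, add_pos hc hd, fun x => ?_⟩
  calc sNorm A ((T + X) x) ≤ sNorm A (T x) + sNorm A (X x) := sNorm_add_le hA _ _
    _ ≤ c * sNorm A x + d * sNorm A x := add_le_add (hcT x) (hdX x)
    _ = (c + d) * sNorm A x := by ring

theorem ABounded.neg {T : E →L[ℂ] E} (hT : ABounded A T) : ABounded A (-T) := by
  simpa [ABounded, sNorm_neg] using hT

theorem ABounded.sub (hA : A.IsPositive) {T X : E →L[ℂ] E} (hT : ABounded A T)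
    (hX : ABounded A X) : ABounded A (T - X) := by
  simpa [sub_eq_add_neg] using hT.add hA hX.neg

theorem numRad_nonneg (A T : E →L[ℂ] E) : 0 ≤ numRad A T :=
  Real.sSup_nonneg <| by rintro _ ⟨x, -, rfl⟩; exact norm_nonneg _

theorem numRad_neg (A T : E →L[ℂ] E) : numRad A (-T) = numRad A T := by
  simp [numRad, sInner]

/- `numRad` is a real `sSup`, which bounds its set only when that set is bounded above: this is
where `A`-boundedness enters. -/
theorem ABounded.norm_sInner_le_numRad (hA : A.IsPositive) {T : E →L[ℂ] E} (hT : ABounded A T)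
    {x : E} (hx : sNorm A x = 1) : ‖sInner A (T x) x‖ ≤ numRad A T := by
  obtain ⟨c, -, hc⟩ := hT
  refine le_csSup ⟨c, ?_⟩ ⟨x, hx, rfl⟩
  rintro _ ⟨y, hy, rfl⟩
  calc ‖sInner A (T y) y‖ ≤ sNorm A (T y) * sNorm A y := norm_sInner_le_sNorm_mul_sNorm hA _ _
    _ ≤ c := by simpa [hy] using hc y

theorem numRad_le_of_forall {T : E →L[ℂ] E} {c : ℝ} (hc : 0 ≤ c)
    (h : ∀ x, sNorm A x = 1 → ‖sInner A (T x) x‖ ≤ c) : numRad A T ≤ c :=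
  Real.sSup_le (by rintro _ ⟨x, hx, rfl⟩; exact h x hx) hc

theorem two_mul_numRad_le (hA : A.IsPositive) {T X : E →L[ℂ] E} (hT : ABounded A T)
    (hX : ABounded A X) : 2 * numRad A T ≤ numRad A (T + X) + numRad A (T - X) := by
  rw [← le_div_iff₀' two_pos]
  refine numRad_le_of_forall
    (div_nonneg (add_nonneg (numRad_nonneg _ _) (numRad_nonneg _ _)) zero_le_two) fun x hx => ?_
  have hsum : sInner A ((T + X) x) x + sInner A ((T - X) x) x = 2 * sInner A (T x) x := by
    simp only [sInner, add_apply, sub_apply, map_add, map_sub, inner_add_left, inner_sub_left]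
    ring
  have htri := norm_add_le (sInner A ((T + X) x) x) (sInner A ((T - X) x) x)
  rw [hsum, norm_mul, Complex.norm_two] at htri
  linarith [(hT.add hA hX).norm_sInner_le_numRad hA hx,
    (hT.sub hA hX).norm_sInner_le_numRad hA hx]

end

theorem stmt14_general {H : Type*} [NormedAddCommGroup H] [InnerProductSpace ℂ H]
    (A : H →L[ℂ] H) (hA : A.IsPositive)
    (T X : H →L[ℂ] H) (hT : ABounded A T) (hX : ABounded A X) :
    max (numRad A T) (numRad A X) + (1 / 2) * |numRad A (T + X) - numRad A (T - X)| ≤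
      max (numRad A (T + X)) (numRad A (T - X)) := by
  have hT₂ := two_mul_numRad_le hA hT hX
  have hX₂ := two_mul_numRad_le hA hX hT
  rw [add_comm X T, ← neg_sub T X, numRad_neg] at hX₂
  rw [max_eq_add_div_two_add_abs_sub_div_two (numRad A (T + X))]
  have : max (numRad A T) (numRad A X) ≤ (numRad A (T + X) + numRad A (T - X)) / 2 :=
    max_le (by linarith) (by linarith)
  linarith

theorem stmt14 {H : Type*} [NormedAddCommGroup H] [InnerProductSpace ℂ H] [CompleteSpace H]
    (A : H →L[ℂ] H) (hA : A.IsPositive)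
    (T X : H →L[ℂ] H) (hT : ABounded A T) (hX : ABounded A X) :
    max (numRad A T) (numRad A X) + (1 / 2) * |numRad A (T + X) - numRad A (T - X)| ≤
      max (numRad A (T + X)) (numRad A (T - X)) :=
  stmt14_general A hA T X hT hX
end
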